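/- Let H be a finite-dimensional complex inner product space, let d_1, …, d_m, g_1, …, g_m ∈ H satisfy the biorthogonality condition ⟨d_k, g_l⟩ = δ_{kl}, and set ĝ_k = g_k/‖g_k‖. Define M_*(ρ) = ∑_{k,l=1}^m ⟨d_l, ρ d_k⟩ ⟨ĝ_k, ·⟩ ĝ_l, i.e. M_*(ρ) = ∑_{k,l} ⟨d_l, ρ d_k⟩ |ĝ_l⟩⟨ĝ_k|. Then for each fixed l, M_*(|ĝ_l⟩⟨ĝ_l|) = ‖g_l‖^{-2} |ĝ_l⟩⟨ĝ_l|; in particular ∑_{k=1}^m ⟨d_k, ĝ_l⟩⟨ĝ_l, d_k⟩ = ‖g_l‖^{-2}, so if the input state is the pure state |ĝ_l⟩⟨ĝ_l|, the outcome occurs with probability ‖g_l‖^{-2} and the conditional output state is again |ĝ_l⟩⟨ĝ_l|. -/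

import Mathlib

/-- The rank-one operator `|u⟩⟨v| : ψ ↦ ⟨v, ψ⟩ u` (inner product conjugate-linear in the
first argument, linear in the second). -/
noncomputable def rankOne {H : Type*} [NormedAddCommGroup H] [InnerProductSpace ℂ H]
    (u v : H) : H →ₗ[ℂ] H where
  toFun ψ := (inner ℂ v ψ : ℂ) • u
  map_add' x y := by simp [inner_add_right, add_smul]
  map_smul' c x := by simp [inner_smul_right, smul_smul]

/-!
Biorthogonality gives `⟨d_k, ĝ_l⟩ = ⟨ĝ_l, d_k⟩ = ‖g_l‖⁻¹ δ_{kl}`, the coefficient being real.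
Hence in `M_*(|ĝ_l⟩⟨ĝ_l|) = ∑_{k,k'} ⟨d_{k'}, ĝ_l⟩⟨ĝ_l, d_k⟩ |ĝ_{k'}⟩⟨ĝ_k|` only the term
`k = k' = l` survives, with coefficient `‖g_l‖⁻²`; the same collapse evaluates the outcome
probability `∑_k ⟨d_k, ĝ_l⟩⟨ĝ_l, d_k⟩`.
-/

section Biorthogonal

variable {H : Type*} [NormedAddCommGroup H] [InnerProductSpace ℂ H]

theorem rankOne_apply (u v ψ : H) : rankOne u v ψ = (inner ℂ v ψ : ℂ) • u := rfl

variable {ι : Type*} [DecidableEq ι] {d g : ι → H}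

theorem inner_real_smul_right_of_biorthogonal
    (hbi : ∀ k l, (inner ℂ (d k) (g l) : ℂ) = if k = l then 1 else 0) (r : ℝ) (k l : ι) :
    (inner ℂ (d k) (r • g l) : ℂ) = if k = l then (r : ℂ) else 0 := by
  rw [RCLike.real_smul_eq_coe_smul (K := ℂ), inner_smul_right, hbi]
  simp

theorem inner_real_smul_left_of_biorthogonal
    (hbi : ∀ k l, (inner ℂ (d k) (g l) : ℂ) = if k = l then 1 else 0) (r : ℝ) (k l : ι) :
    (inner ℂ (r • g l) (d k) : ℂ) = if k = l then (r : ℂ) else 0 := by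
  rw [← inner_conj_symm, inner_real_smul_right_of_biorthogonal hbi]
  split_ifs <;> simp

end Biorthogonal

theorem stmt_16_general {H : Type*} [NormedAddCommGroup H] [InnerProductSpace ℂ H]
    (m : ℕ) (d g : Fin m → H)
    (hbi : ∀ k l : Fin m, (inner ℂ (d k) (g l) : ℂ) = if k = l then 1 else 0)
    (ghat : Fin m → H) (hghat : ∀ k, ghat k = ‖g k‖⁻¹ • g k)
    (Mstar : (H →ₗ[ℂ] H) → (H →ₗ[ℂ] H))
    (hMstar : ∀ ρ : H →ₗ[ℂ] H, Mstar ρ =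
      ∑ k : Fin m, ∑ l : Fin m, (inner ℂ (d l) (ρ (d k)) : ℂ) • rankOne (ghat l) (ghat k)) :
    ∀ l : Fin m,
      Mstar (rankOne (ghat l) (ghat l))
          = ((‖g l‖ : ℂ) ^ 2)⁻¹ • rankOne (ghat l) (ghat l) ∧
      ∑ k : Fin m, (inner ℂ (d k) (ghat l) : ℂ) * (inner ℂ (ghat l) (d k) : ℂ)
          = ((‖g l‖ : ℂ) ^ 2)⁻¹ := by
  intro l
  have hdg (k : Fin m) : (inner ℂ (d k) (ghat l) : ℂ) = if k = l then (‖g l‖ : ℂ)⁻¹ else 0 := by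
    simpa only [hghat, Complex.ofReal_inv] using
      inner_real_smul_right_of_biorthogonal hbi ‖g l‖⁻¹ k l
  have hgd (k : Fin m) : (inner ℂ (ghat l) (d k) : ℂ) = if k = l then (‖g l‖ : ℂ)⁻¹ else 0 := by
    simpa only [hghat, Complex.ofReal_inv] using
      inner_real_smul_left_of_biorthogonal hbi ‖g l‖⁻¹ k l
  have hsq : ((‖g l‖ : ℂ) ^ 2)⁻¹ = (‖g l‖ : ℂ)⁻¹ * (‖g l‖ : ℂ)⁻¹ := by rw [sq, mul_inv]
  refine ⟨?_, ?_⟩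
  · rw [hMstar]
    simp only [rankOne_apply, inner_smul_right, hdg, hgd]
    simp only [ite_mul, mul_ite, zero_mul, mul_zero, ite_smul, zero_smul, Finset.sum_ite_eq',
      Finset.mem_univ, if_true, hsq]
  · simp only [hdg, hgd, ite_mul, zero_mul, Finset.sum_ite_eq', Finset.mem_univ, if_true, hsq]

/-- 'very weak repeatability': for biorthogonal families `d_k, g_l`
(`⟨d_k, g_l⟩ = δ_{kl}`), normalized vectors `ghat_k = g_k/‖g_k‖`, and the instrument
`M_*(ρ) = ∑_{k,l} ⟨d_l, ρ d_k⟩ |ghat_l⟩⟨ghat_k|`, one has, for each `l`,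
`M_*(|ghat_l⟩⟨ghat_l|) = ‖g_l‖⁻² |ghat_l⟩⟨ghat_l|` and `∑_k ⟨d_k, ghat_l⟩⟨ghat_l, d_k⟩ = ‖g_l‖⁻²`. -/
theorem stmt_16 {H : Type*} [NormedAddCommGroup H] [InnerProductSpace ℂ H]
    [FiniteDimensional ℂ H] (m : ℕ) (d g : Fin m → H)
    (hbi : ∀ k l : Fin m, (inner ℂ (d k) (g l) : ℂ) = if k = l then 1 else 0)
    (ghat : Fin m → H) (hghat : ∀ k, ghat k = ‖g k‖⁻¹ • g k)
    (Mstar : (H →ₗ[ℂ] H) → (H →ₗ[ℂ] H))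
    (hMstar : ∀ ρ : H →ₗ[ℂ] H, Mstar ρ =
      ∑ k : Fin m, ∑ l : Fin m, (inner ℂ (d l) (ρ (d k)) : ℂ) • rankOne (ghat l) (ghat k)) :
    ∀ l : Fin m,
      Mstar (rankOne (ghat l) (ghat l))
          = ((‖g l‖ : ℂ) ^ 2)⁻¹ • rankOne (ghat l) (ghat l) ∧
      ∑ k : Fin m, (inner ℂ (d k) (ghat l) : ℂ) * (inner ℂ (ghat l) (d k) : ℂ)
          = ((‖g l‖ : ℂ) ^ 2)⁻¹ :=
  stmt_16_general m d g hbi ghat hghat Mstar hMstar
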